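/- arXiv:2002.10498 — 2 statements merged into one kernel-verified Lean document; each statement's English description precedes it below -/
import Mathlib

section
/- (Macronode partition) In a compressed strongly connected graph, the vertex sets of the macronodes centered at the bivalent nodes partition the vertex set: every node belongs to exactly one macronode. -/
/-- A directed multigraph: arcs `E` with tail and head maps into nodes `V`. -/
structure MultiDigraph (V E : Type) where
  tail : E → V
  head : E → V

namespace MultiDigraph

variable {V E : Type} (G : MultiDigraph V E)

/-- A walk is a (possibly empty) list of arcs that chain head-to-tail. -/
def IsWalk (W : List E) : Prop := W.Chain' (fun a b => G.head a = G.tail b)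

/-- The node sequence `v₀, v₁, …, v_ℓ` of a nonempty walk (empty for the empty walk). -/
def nodes : List E → List V
  | [] => []
  | e :: W => G.tail e :: (e :: W).map G.head

/-- The start node of a nonempty walk. -/
def src (W : List E) : Option V := W.head?.map G.tail

/-- The end node of a nonempty walk. -/
def dst (W : List E) : Option V := W.getLast?.map G.head

/-- A path: a walk whose nodes are all distinct, except that the last node may
equal the first one (closed path). -/
def IsPath (W : List E) : Prop :=
  G.IsWalk W ∧ (G.nodes W).dropLast.Nodup ∧ (G.nodes W).tail.Nodup

/-- `P` is a forbidden path for the pair of arcs `(eR, eL)`: a non-empty path from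
`tail eR` to `head eL` whose first arc differs from `eR` and last arc differs from `eL`. -/
def ForbiddenPath (eR eL : E) (P : List E) : Prop :=
  G.IsPath P ∧ P ≠ [] ∧ G.src P = some (G.tail eR) ∧ G.dst P = some (G.head eL) ∧
    P.head? ≠ some eR ∧ P.getLast? ≠ some eL

/-- A walk `e₀ … e_ℓ` is an omnitig if for all `1 ≤ i ≤ j ≤ ℓ` there is no
forbidden path from `tail e_j` to `head e_{i-1}`. -/
def IsOmnitig (W : List E) : Prop :=
  G.IsWalk W ∧ ∀ i j : ℕ, (hi : 1 ≤ i) → (hij : i ≤ j) → (hj : j < W.length) →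
    ¬ ∃ P, G.ForbiddenPath (W[j]'hj) (W[i-1]'(by omega)) P

/-- `u` reaches `v` by a (possibly empty) walk. -/
def Reaches (u v : V) : Prop :=
  u = v ∨ ∃ W, G.IsWalk W ∧ G.src W = some u ∧ G.dst W = some v

def StronglyConnected : Prop := ∀ u v : V, G.Reaches u v

/-- In-degree of a node. -/
noncomputable def inDeg (v : V) : ℕ := Nat.card {e : E // G.head e = v}

/-- Out-degree of a node. -/
noncomputable def outDeg (v : V) : ℕ := Nat.card {e : E // G.tail e = v}

def JoinArc (e : E) : Prop := 1 < G.inDeg (G.head e)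

def SplitArc (e : E) : Prop := 1 < G.outDeg (G.tail e)

def Bivalent (v : V) : Prop := 1 < G.inDeg v ∧ 1 < G.outDeg v

def JoinFree (W : List E) : Prop := ∀ e ∈ W, ¬ G.JoinArc e

def SplitFree (W : List E) : Prop := ∀ e ∈ W, ¬ G.SplitArc e

/-- A closed walk covering every arc at least once. -/
def IsClosedArcCovering (W : List E) : Prop :=
  G.IsWalk W ∧ W ≠ [] ∧ G.src W = G.dst W ∧ ∀ e : E, e ∈ W

/-- `W'` occurs as a cyclic (wrap-around) subwalk of the closed walk `W`. -/
def IsCyclicSubwalk (W' W : List E) : Prop :=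
  ∃ i : ℕ, ∀ k : ℕ, k < W'.length → W'[k]? = W[(i + k) % W.length]?

/-- The graph consists of a single closed path through all nodes and arcs. -/
def IsClosedPathGraph : Prop :=
  ∃ C : List E, G.IsPath C ∧ C ≠ [] ∧ G.src C = G.dst C ∧ C.Nodup ∧
    (∀ e : E, e ∈ C) ∧ (∀ v : V, v ∈ G.nodes C)

/-- Compressed graph: no biunivocal nodes and no biunivocal arcs. -/
def Compressed : Prop :=
  (∀ v : V, 1 < G.inDeg v ∨ 1 < G.outDeg v) ∧
  (∀ e : E, G.JoinArc e ∨ G.SplitArc e)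

/-- `u` reaches `v` by a (possibly empty) path avoiding the arc `f`. -/
def ReachesAvoid (f : E) (u v : V) : Prop :=
  u = v ∨ ∃ P, G.IsPath P ∧ f ∉ P ∧ G.src P = some u ∧ G.dst P = some v

/-- A maximal omnitig: an omnitig extendable neither to the left nor to the right. -/
def IsMaximalOmnitig (W : List E) : Prop :=
  G.IsOmnitig W ∧ (∀ e : E, ¬ G.IsOmnitig (e :: W)) ∧ (∀ e : E, ¬ G.IsOmnitig (W ++ [e]))

/-- The reverse graph. -/
def rev : MultiDigraph V E := ⟨G.head, G.tail⟩

/-- Nodes reachable from `v` by a join-free path. -/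
def Rplus (v : V) : Set V :=
  {u | u = v ∨ ∃ W, G.IsPath W ∧ G.JoinFree W ∧ G.src W = some v ∧ G.dst W = some u}

/-- Nodes reaching `v` by a split-free path. -/
def Rminus (v : V) : Set V :=
  {u | u = v ∨ ∃ W, G.IsPath W ∧ G.SplitFree W ∧ G.src W = some u ∧ G.dst W = some v}

/-- The node set of the macronode centered at `v`. -/
def macronodeSet (v : V) : Set V := G.Rplus v ∪ G.Rminus v

/-- The graph obtained from `G` by contracting the arc `e`. -/
def contract [DecidableEq V] (e : E) : MultiDigraph V {a : E // a ≠ e} where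
  tail a := if G.tail a.1 = G.head e then G.tail e else G.tail a.1
  head a := if G.head a.1 = G.head e then G.tail e else G.head a.1

end MultiDigraph

/-! A bivalent node lies in no macronode but its own: a nonempty join-free path ends at a node of
in-degree one, and a split-free path starts at a node of out-degree one. Every other node `u` of a
compressed graph has in-degree at most one or out-degree at most one, but not both; reversing all
arcs swaps the two cases, so let `u` have out-degree at most one. Then `u` can only lie in some `R⁻(v)`, and split-free paths
leave no choice: starting at `u` and following the unique outgoing arcs, the path is forced up to
the first node of out-degree at least two, which is therefore the only candidate for `v`. Such a
node is reached because some node has out-degree at least two (otherwise compressedness gives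
`∑ in-degrees ≥ 2|V| > |V| ≥ ∑ out-degrees`) and the graph is strongly connected; it is bivalent
because the arc entering it is not a split, hence a join. -/

namespace MultiDigraph

variable {V E : Type} (G : MultiDigraph V E)

section Walks

variable {G}

lemma src_cons (a : E) (W : List E) : G.src (a :: W) = some (G.tail a) := rfl

lemma dst_cons_of_ne_nil (a : E) {W : List E} (hW : W ≠ []) : G.dst (a :: W) = G.dst W := by
  obtain ⟨b, W, rfl⟩ := List.exists_cons_of_ne_nil hW
  simp only [dst, List.getLast?_cons_cons]

lemma dst_append_cons (l : List E) (c : E) (W : List E) :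
    G.dst (l ++ c :: W) = G.dst (c :: W) := by
  simp only [dst, List.getLast?_append_cons]

lemma exists_mem_tail_eq_of_src_eq {W : List E} {x : V} (h : G.src W = some x) :
    ∃ a ∈ W, G.tail a = x := by
  obtain ⟨a, ha, rfl⟩ := Option.map_eq_some_iff.1 h
  exact ⟨a, List.mem_of_mem_head? ha, rfl⟩

lemma exists_mem_head_eq_of_dst_eq {W : List E} {y : V} (h : G.dst W = some y) :
    ∃ a ∈ W, G.head a = y := by
  obtain ⟨a, ha, rfl⟩ := Option.map_eq_some_iff.1 h
  exact ⟨a, List.mem_of_mem_getLast? ha, rfl⟩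

lemma nodes_cons {a : E} {W : List E} (h : G.src W = some (G.head a)) :
    G.nodes (a :: W) = G.tail a :: G.nodes W := by
  cases W with
  | nil => simp [src] at h
  | cons b W =>
    simp only [src, List.head?_cons, Option.map_some, Option.some.injEq] at h
    simp [nodes, h]

lemma IsWalk.of_cons {a : E} {W : List E} (h : G.IsWalk (a :: W)) : G.IsWalk W :=
  List.IsChain.tail h

lemma IsWalk.src_eq {a : E} {W : List E} (h : G.IsWalk (a :: W)) (hW : W ≠ []) :
    G.src W = some (G.head a) := by
  obtain ⟨b, W, rfl⟩ := List.exists_cons_of_ne_nil hW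
  simp [src, (List.isChain_cons_cons.1 h).1]

lemma IsWalk.cons {a : E} {W : List E} (h : G.IsWalk W) (hsrc : G.src W = some (G.head a)) :
    G.IsWalk (a :: W) := by
  cases W with
  | nil => simp [src] at hsrc
  | cons b W =>
    simp only [src, List.head?_cons, Option.map_some, Option.some.injEq] at hsrc
    exact List.isChain_cons_cons.2 ⟨hsrc.symm, h⟩

lemma nodes_eq_map_tail_append {W : List E} {y : V} (hW : G.IsWalk W) (hy : G.dst W = some y) :
    G.nodes W = W.map G.tail ++ [y] := by
  induction W with
  | nil => simp [dst] at hy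
  | cons a W ih =>
    rcases eq_or_ne W [] with rfl | hne
    · simp only [dst, List.getLast?_singleton, Option.map_some, Option.some.injEq] at hy
      simp [nodes, hy]
    · rw [nodes_cons (hW.src_eq hne), ih hW.of_cons (by rwa [← dst_cons_of_ne_nil a hne]),
        List.map_cons, List.cons_append]

lemma isPath_of_nodup_nodes {W : List E} (hW : G.IsWalk W) (h : (G.nodes W).Nodup) :
    G.IsPath W :=
  ⟨hW, h.sublist (List.dropLast_sublist _), h.sublist (List.tail_sublist _)⟩

lemma exists_nodup_subwalk {W : List E} {x y : V} (hW : G.IsWalk W) (hx : G.src W = some x)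
    (hy : G.dst W = some y) (hxy : x ≠ y) :
    ∃ P, G.IsWalk P ∧ (G.nodes P).Nodup ∧ P ⊆ W ∧ G.src P = some x ∧ G.dst P = some y := by
  induction W generalizing x with
  | nil => simp [src] at hx
  | cons a W ih =>
    obtain rfl : G.tail a = x := Option.some.inj hx
    have single (h : G.head a = y) :
        ∃ P, G.IsWalk P ∧ (G.nodes P).Nodup ∧ P ⊆ a :: W ∧ G.src P = some (G.tail a) ∧
          G.dst P = some y :=
      ⟨[a], List.isChain_singleton a, by simp [nodes, h, hxy], by simp, rfl, by simp [dst, h]⟩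
    rcases eq_or_ne W [] with rfl | hne
    · exact single (by simpa [dst] using hy)
    by_cases hay : G.head a = y
    · exact single hay
    obtain ⟨P, hP, hPnd, hPW, hPx, hPy⟩ :=
      ih hW.of_cons (hW.src_eq hne) (by rwa [← dst_cons_of_ne_nil a hne]) hay
    have hnodes := nodes_eq_map_tail_append hP hPy
    by_cases hmem : G.tail a ∈ P.map G.tail
    · -- the walk returns to `tail a`: keep only the part of `P` after that return
      obtain ⟨c, hc, hca⟩ := List.mem_map.1 hmem
      obtain ⟨l, r, rfl⟩ := List.append_of_mem hc
      have hr : G.IsWalk (c :: r) := hP.right_of_append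
      have hry : G.dst (c :: r) = some y := by rwa [← dst_append_cons l]
      refine ⟨c :: r, hr, ?_, fun e he => List.mem_cons_of_mem _ (hPW (List.mem_append_right _ he)),
        by rw [src_cons, hca], hry⟩
      rw [nodes_eq_map_tail_append hr hry]
      rw [hnodes, List.map_append, List.append_assoc] at hPnd
      exact hPnd.of_append_right
    · have hPne : P ≠ [] := by rintro rfl; simp [src] at hPx
      refine ⟨a :: P, hP.cons hPx, ?_, List.cons_subset_cons _ hPW, rfl,
        by rw [dst_cons_of_ne_nil a hPne, hPy]⟩
      rw [nodes_cons hPx, List.nodup_cons]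
      exact ⟨by simp [hnodes, hmem, hxy], hPnd⟩

end Walks

section Degrees

lemma eq_of_outDeg_le_one [Finite E] {x : V} (h : G.outDeg x ≤ 1) {a b : E}
    (ha : G.tail a = x) (hb : G.tail b = x) : a = b :=
  congrArg Subtype.val ((Finite.card_le_one_iff_subsingleton.1 h).elim ⟨a, ha⟩ ⟨b, hb⟩)

lemma sum_inDeg [Fintype V] [Finite E] : ∑ v, G.inDeg v = Nat.card E := by
  unfold inDeg
  rw [← Nat.card_sigma]
  exact Nat.card_congr (Equiv.sigmaFiberEquiv G.head)

lemma sum_outDeg [Fintype V] [Finite E] : ∑ v, G.outDeg v = Nat.card E :=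
  G.rev.sum_inDeg

lemma exists_one_lt_outDeg [Fintype V] [Finite E] [Nonempty V] (hc : G.Compressed) :
    ∃ v, 1 < G.outDeg v := by
  by_contra! hout
  have hin (v : V) : 2 ≤ G.inDeg v := (hc.1 v).resolve_right (hout v).not_gt
  have : 2 * Fintype.card V ≤ Fintype.card V := calc
    2 * Fintype.card V = ∑ _v : V, 2 := by simp [mul_comm]
    _ ≤ ∑ v, G.inDeg v := Finset.sum_le_sum fun v _ => hin v
    _ = ∑ v, G.outDeg v := by rw [sum_inDeg, sum_outDeg]
    _ ≤ ∑ _v : V, 1 := Finset.sum_le_sum fun v _ => hout v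
    _ = Fintype.card V := by simp
  have := Fintype.card_pos (α := V)
  omega

end Degrees

section Reverse

variable {G}

lemma rev_isWalk_reverse {W : List E} : G.rev.IsWalk W.reverse ↔ G.IsWalk W :=
  List.isChain_reverse.trans
    ⟨fun h => h.imp fun _ _ => Eq.symm, fun h => h.imp fun _ _ => Eq.symm⟩

lemma rev_src_reverse (W : List E) : G.rev.src W.reverse = G.dst W := by
  simp [src, dst, rev, List.head?_reverse]

lemma rev_dst_reverse (W : List E) : G.rev.dst W.reverse = G.src W := by
  simp [src, dst, rev, List.getLast?_reverse]

lemma rev_nodes_reverse {W : List E} (hW : G.IsWalk W) :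
    G.rev.nodes W.reverse = (G.nodes W).reverse := by
  cases W with
  | nil => rfl
  | cons a W =>
    rw [nodes_eq_map_tail_append (rev_isWalk_reverse.2 hW) (rev_dst_reverse _)]
    simp [nodes, rev, List.map_reverse]

lemma rev_isPath_reverse {W : List E} : G.rev.IsPath W.reverse ↔ G.IsPath W := by
  refine ⟨fun ⟨hw, h1, h2⟩ => ?_, fun ⟨hw, h1, h2⟩ => ?_⟩
  · have hw' := rev_isWalk_reverse.1 hw
    rw [rev_nodes_reverse hw', List.dropLast_reverse, List.nodup_reverse] at h1
    rw [rev_nodes_reverse hw', List.tail_reverse, List.nodup_reverse] at h2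
    exact ⟨hw', h2, h1⟩
  · refine ⟨rev_isWalk_reverse.2 hw, ?_, ?_⟩
    · rwa [rev_nodes_reverse hw, List.dropLast_reverse, List.nodup_reverse]
    · rwa [rev_nodes_reverse hw, List.tail_reverse, List.nodup_reverse]

lemma rev_Rplus (v : V) : G.rev.Rplus v = G.Rminus v := by
  ext u
  refine or_congr_right ⟨fun ⟨W, hW, hjf, hv, hu⟩ => ?_, fun ⟨W, hW, hsf, hu, hv⟩ => ?_⟩
  · refine ⟨W.reverse, G.rev.rev_isPath_reverse.2 hW, fun e he => hjf e (List.mem_reverse.1 he),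
      ?_, ?_⟩
    · rwa [← G.rev.rev_src_reverse] at hu
    · rwa [← G.rev.rev_dst_reverse] at hv
  · refine ⟨W.reverse, rev_isPath_reverse.2 hW, fun e he => hsf e (List.mem_reverse.1 he), ?_, ?_⟩
    · rwa [rev_src_reverse]
    · rwa [rev_dst_reverse]

lemma rev_Rminus (v : V) : G.rev.Rminus v = G.Rplus v :=
  (G.rev.rev_Rplus v).symm

lemma rev_macronodeSet (v : V) : G.rev.macronodeSet v = G.macronodeSet v := by
  rw [macronodeSet, macronodeSet, rev_Rplus, rev_Rminus, Set.union_comm]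

lemma rev_bivalent (v : V) : G.rev.Bivalent v ↔ G.Bivalent v :=
  and_comm

lemma Compressed.rev (hc : G.Compressed) : G.rev.Compressed :=
  ⟨fun v => (hc.1 v).symm, fun e => (hc.2 e).symm⟩

lemma StronglyConnected.rev (hG : G.StronglyConnected) : G.rev.StronglyConnected := by
  intro u v
  rcases hG v u with h | ⟨W, hW, hWv, hWu⟩
  · exact Or.inl h.symm
  · exact Or.inr ⟨W.reverse, rev_isWalk_reverse.2 hW, by rwa [rev_src_reverse],
      by rwa [rev_dst_reverse]⟩

end Reverse

section SplitFree

variable {G}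

lemma outDeg_le_one_of_splitFree {W : List E} {x : V} (hs : G.SplitFree W)
    (hx : G.src W = some x) : G.outDeg x ≤ 1 := by
  obtain ⟨a, ha, rfl⟩ := exists_mem_tail_eq_of_src_eq hx
  exact not_lt.1 (hs a ha)

lemma one_lt_inDeg_of_splitFree (hc : G.Compressed) {W : List E} {y : V} (hs : G.SplitFree W)
    (hy : G.dst W = some y) : 1 < G.inDeg y := by
  obtain ⟨a, ha, rfl⟩ := exists_mem_head_eq_of_dst_eq hy
  exact (hc.2 a).resolve_right (hs a ha)

lemma exists_splitFree_walk {W : List E} {x w : V} (hW : G.IsWalk W) (hx : G.src W = some x)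
    (hw : G.dst W = some w) (hx1 : G.outDeg x ≤ 1) (hw1 : 1 < G.outDeg w) :
    ∃ P v, G.IsWalk P ∧ G.SplitFree P ∧ G.src P = some x ∧ G.dst P = some v ∧
      1 < G.outDeg v := by
  induction W generalizing x with
  | nil => simp [src] at hx
  | cons a W ih =>
    obtain rfl : G.tail a = x := Option.some.inj hx
    have ha : ¬ G.SplitArc a := hx1.not_gt
    by_cases hsplit : 1 < G.outDeg (G.head a)
    · exact ⟨[a], G.head a, List.isChain_singleton a, by simpa [SplitFree] using ha, rfl, rfl,
        hsplit⟩
    have hne : W ≠ [] := by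
      rintro rfl
      obtain rfl : G.head a = w := by simpa [dst] using hw
      exact hsplit hw1
    obtain ⟨P, v, hP, hPs, hPx, hPv, hv⟩ := ih hW.of_cons (hW.src_eq hne)
      (by rwa [← dst_cons_of_ne_nil a hne]) (not_lt.1 hsplit)
    have hPne : P ≠ [] := by rintro rfl; simp [src] at hPx
    exact ⟨a :: P, v, hP.cons hPx, List.forall_mem_cons.2 ⟨ha, hPs⟩, rfl,
      by rw [dst_cons_of_ne_nil a hPne, hPv], hv⟩

lemma eq_of_splitFree_walks [Finite E] {W W' : List E} {v v' : V} (hW : G.IsWalk W)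
    (hW' : G.IsWalk W') (hs : G.SplitFree W) (hs' : G.SplitFree W') (hsrc : G.src W = G.src W')
    (hv : G.dst W = some v) (hv' : G.dst W' = some v') (hv1 : 1 < G.outDeg v)
    (hv1' : 1 < G.outDeg v') : v = v' := by
  induction W generalizing W' with
  | nil => simp [dst] at hv
  | cons a W ih =>
    cases W' with
    | nil => simp [dst] at hv'
    | cons a' W' =>
      obtain rfl : a = a' :=
        G.eq_of_outDeg_le_one (not_lt.1 (hs a List.mem_cons_self)) rfl (Option.some.inj hsrc).symm
      have hs₁ := (List.forall_mem_cons.1 hs).2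
      have hs₁' := (List.forall_mem_cons.1 hs').2
      rcases eq_or_ne W [] with rfl | hne <;> rcases eq_or_ne W' [] with rfl | hne'
      · simp only [dst, List.getLast?_singleton, Option.map_some, Option.some.injEq] at hv hv'
        rw [← hv, ← hv']
      · simp only [dst, List.getLast?_singleton, Option.map_some, Option.some.injEq] at hv
        exact absurd (outDeg_le_one_of_splitFree hs₁' (hW'.src_eq hne')) (hv ▸ hv1).not_ge
      · simp only [dst, List.getLast?_singleton, Option.map_some, Option.some.injEq] at hv'
        exact absurd (outDeg_le_one_of_splitFree hs₁ (hW.src_eq hne)) (hv' ▸ hv1').not_ge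
      · exact ih hW.of_cons hW'.of_cons hs₁ hs₁' (by rw [hW.src_eq hne, hW'.src_eq hne'])
          (by rwa [← dst_cons_of_ne_nil a hne]) (by rwa [← dst_cons_of_ne_nil a hne'])

end SplitFree

section Macronodes

variable {G}

lemma eq_of_mem_Rplus {u v : V} (h : u ∈ G.Rplus v) (hu : 1 < G.inDeg u) : u = v := by
  rcases h with h | ⟨W, -, hjf, -, hu'⟩
  · exact h
  · obtain ⟨a, ha, rfl⟩ := exists_mem_head_eq_of_dst_eq hu'
    exact absurd hu (hjf a ha)

lemma eq_of_mem_Rminus {u v : V} (h : u ∈ G.Rminus v) (hu : 1 < G.outDeg u) : u = v :=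
  G.rev.eq_of_mem_Rplus (by rwa [rev_Rplus]) hu

lemma existsUnique_of_bivalent {u : V} (hu : G.Bivalent u) :
    ∃! v, G.Bivalent v ∧ u ∈ G.macronodeSet v :=
  ⟨u, ⟨hu, Or.inl (Or.inl rfl)⟩, fun _ ⟨_, h⟩ =>
    h.elim (fun h => (eq_of_mem_Rplus h hu.1).symm) fun h => (eq_of_mem_Rminus h hu.2).symm⟩

lemma existsUnique_of_outDeg_le_one [Fintype V] [Finite E] (hG : G.StronglyConnected)
    (hc : G.Compressed) {u : V} (hin : 1 < G.inDeg u) (hout : G.outDeg u ≤ 1) :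
    ∃! v, G.Bivalent v ∧ u ∈ G.macronodeSet v := by
  have : Nonempty V := ⟨u⟩
  obtain ⟨w, hw⟩ := G.exists_one_lt_outDeg hc
  obtain ⟨W, hW, hWu, hWw⟩ := (hG u w).resolve_left (by rintro rfl; omega)
  obtain ⟨P, v, hP, hPs, hPu, hPv, hv⟩ := exists_splitFree_walk hW hWu hWw hout hw
  obtain ⟨Q, hQ, hQnd, hQP, hQu, hQv⟩ := exists_nodup_subwalk hP hPu hPv (by rintro rfl; omega)
  have hQs : G.SplitFree Q := fun e he => hPs e (hQP he)
  refine ⟨v, ⟨⟨one_lt_inDeg_of_splitFree hc hQs hQv, hv⟩,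
    Or.inr (Or.inr ⟨Q, isPath_of_nodup_nodes hQ hQnd, hQs, hQu, hQv⟩)⟩, ?_⟩
  rintro v' ⟨hv', hu | hu⟩
  · exact absurd (eq_of_mem_Rplus hu hin ▸ hv'.2) hout.not_gt
  · rcases hu with rfl | ⟨W', hW', hW's, hW'u, hW'v⟩
    · exact absurd hv'.2 hout.not_gt
    · exact (eq_of_splitFree_walks hQ hW'.1 hQs hW's (hQu.trans hW'u.symm) hQv hW'v hv hv'.2).symm

end Macronodes

end MultiDigraph

theorem stmt_16_general {V E : Type} [Fintype V] [Fintype E]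
    (G : MultiDigraph V E) (hG : G.StronglyConnected)
    (hc : G.Compressed) :
    ∀ u : V, ∃! v : V, G.Bivalent v ∧ u ∈ G.macronodeSet v := by
  intro u
  by_cases hin : 1 < G.inDeg u <;> by_cases hout : 1 < G.outDeg u
  · exact G.existsUnique_of_bivalent ⟨hin, hout⟩
  · exact G.existsUnique_of_outDeg_le_one hG hc hin (not_lt.1 hout)
  · simpa only [MultiDigraph.rev_bivalent, MultiDigraph.rev_macronodeSet] using
      G.rev.existsUnique_of_outDeg_le_one hG.rev hc.rev hout (not_lt.1 hin)
  · exact ((hc.1 u).elim hin hout).elim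

/-- Macronode partition: in a compressed strongly connected graph
(not a closed path), every node belongs to the macronode of exactly one bivalent
node. -/
theorem stmt_16 {V E : Type} [Fintype V] [Fintype E]
    (G : MultiDigraph V E) (hG : G.StronglyConnected)
    (hc : G.Compressed) (hnp : ¬ G.IsClosedPathGraph) :
    ∀ u : V, ∃! v : V, G.Bivalent v ∧ u ∈ G.macronodeSet v :=
  stmt_16_general G hG hc
end

section
/- Let e be a join-free arc of a strongly connected graph G, and let c_e(G) be the graph obtained by contracting e. A walk W' of c_e(G) is an omnitig of c_e(G) if and only if there exists an omnitig W of G such that W' is obtained from W by deleting every occurrence of e. -/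
/-!
Write `u = tail e` and `v = head e`; `e` is the only arc entering `v`. Contracting `e` merges `v`
into `u`, and walks of the two graphs correspond: delete every `e` (`contractWalk`), or insert `e`
before every arc leaving `v` (`expandWalk`). A walk is an omnitig iff no later arc `y` has a
forbidden path back to an earlier arc `x` (`isOmnitig_iff_pairwise`). A forbidden path for `(y, x)`
in one graph yields one in the other for the same pair, except that `e` and an arc leaving `v` may
trade places as `y`; in a walk the two stand next to each other, so the pairwise condition carries
over. If `e` is a loop, strong connectivity leaves no arc besides `e`.
-/

open scoped List

theorem List.IsChain.exists_rel_of_mem_tail {α : Type*} {R : α → α → Prop} {l : List α} {y : α}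
    (h : l.IsChain R) (hy : y ∈ l.tail) : ∃ x ∈ l, R x y := by
  induction l with
  | nil => simp at hy
  | cons a l ih =>
    cases l with
    | nil => simp at hy
    | cons b l =>
      obtain ⟨hab, h⟩ := List.isChain_cons_cons.mp h
      rcases List.mem_cons.mp hy with rfl | hy
      · exact ⟨a, List.mem_cons_self, hab⟩
      · obtain ⟨x, hx, hxy⟩ := ih h hy
        exact ⟨x, List.mem_cons_of_mem a hx, hxy⟩

theorem List.IsChain.exists_rel_of_mem_of_getLast?_ne {α : Type*} {R : α → α → Prop}
    {l : List α} {x : α} (h : l.IsChain R) (hx : x ∈ l) (hlast : l.getLast? ≠ some x) :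
    ∃ y ∈ l, R x y := by
  induction l with
  | nil => simp at hx
  | cons a l ih =>
    cases l with
    | nil => simp_all
    | cons b l =>
      obtain ⟨hab, h⟩ := List.isChain_cons_cons.mp h
      rw [List.getLast?_cons_cons] at hlast
      rcases List.mem_cons.mp hx with rfl | hx
      · exact ⟨b, by simp, hab⟩
      · obtain ⟨y, hy, hxy⟩ := ih h hx hlast
        exact ⟨y, List.mem_cons_of_mem _ hy, hxy⟩

theorem List.Sublist.of_map_injective {α β : Type*} {f : α → β} (hf : Function.Injective f)
    {l₁ l₂ : List α} (h : l₁.map f <+ l₂.map f) : l₁ <+ l₂ := by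
  obtain ⟨l, hl, hmap⟩ := List.sublist_map_iff.mp h
  exact List.map_injective_iff.mpr hf hmap ▸ hl

namespace MultiDigraph

variable {V E : Type} {G : MultiDigraph V E}

theorem dropLast_nodes {W : List E} (hW : G.IsWalk W) : (G.nodes W).dropLast = W.map G.tail := by
  induction W with
  | nil => rfl
  | cons a W ih =>
    cases W with
    | nil => rfl
    | cons b W =>
      obtain ⟨hab, hW⟩ := List.isChain_cons_cons.mp hW
      have hnodes : G.nodes (a :: b :: W) = G.tail a :: G.nodes (b :: W) := by
        simp [nodes, hab]
      rw [hnodes, List.dropLast_cons_of_ne_nil (by simp [nodes]), ih hW, List.map_cons]; rfl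

theorem tail_nodes (W : List E) : (G.nodes W).tail = W.map G.head := by
  cases W <;> rfl

theorem isPath_iff_nodup {W : List E} :
    G.IsPath W ↔ G.IsWalk W ∧ (W.map G.tail).Nodup ∧ (W.map G.head).Nodup := by
  unfold IsPath
  rw [tail_nodes]
  exact ⟨fun ⟨hW, ht, hh⟩ => ⟨hW, dropLast_nodes hW ▸ ht, hh⟩,
    fun ⟨hW, ht, hh⟩ => ⟨hW, (dropLast_nodes hW).symm ▸ ht, hh⟩⟩

theorem IsPath.suffix {W W₂ : List E} (hW : G.IsPath W) (h : W₂ <:+ W) : G.IsPath W₂ := by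
  rw [isPath_iff_nodup] at hW ⊢
  exact ⟨hW.1.suffix h, hW.2.1.sublist (h.sublist.map _), hW.2.2.sublist (h.sublist.map _)⟩

theorem forbiddenPath_iff {eR eL : E} {P : List E} :
    G.ForbiddenPath eR eL P ↔ G.IsPath P ∧ (∃ f ∈ P.head?, G.tail f = G.tail eR ∧ f ≠ eR) ∧
      ∃ g ∈ P.getLast?, G.head g = G.head eL ∧ g ≠ eL := by
  unfold ForbiddenPath src dst
  cases P with
  | nil => simp
  | cons f P =>
    obtain ⟨g, hg⟩ : ∃ g, (f :: P).getLast? = some g := ⟨_, List.getLast?_eq_some_getLast (by simp)⟩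
    simp only [ne_eq, reduceCtorEq, not_false_eq_true, List.head?_cons, Option.map_some,
      Option.some.injEq, hg, true_and, Option.mem_def, exists_eq_left', and_congr_right_iff]
    tauto

theorem isOmnitig_iff_pairwise {W : List E} :
    G.IsOmnitig W ↔ G.IsWalk W ∧ W.Pairwise (fun x y => ∀ P, ¬ G.ForbiddenPath y x P) := by
  refine and_congr_right fun _ => ?_
  rw [List.pairwise_iff_getElem]
  refine ⟨fun h a b ha hb hab P hP => h (a + 1) b (by omega) hab hb ⟨P, by simpa using hP⟩,
    fun h i j hi hij hj ⟨P, hP⟩ => h (i - 1) j _ hj (by omega) P hP⟩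

theorem isOmnitig_nil : G.IsOmnitig [] :=
  isOmnitig_iff_pairwise.mpr ⟨List.isChain_nil, List.Pairwise.nil⟩

theorem eq_of_inDeg_eq_one {v : V} (h : G.inDeg v = 1) {a b : E} (ha : G.head a = v)
    (hb : G.head b = v) : a = b :=
  have := (Nat.card_eq_one_iff_unique.mp h).1
  congrArg Subtype.val (Subsingleton.elim (⟨a, ha⟩ : {x // G.head x = v}) ⟨b, hb⟩)

theorem src_eq_of_dst_eq {v : V} (hv : ∀ a, G.head a = v → G.tail a = v) {W : List E}
    (hW : G.IsWalk W) (hdst : G.dst W = some v) : G.src W = some v := by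
  induction W with
  | nil => simp [dst] at hdst
  | cons a W ih =>
    cases W with
    | nil => simpa [src] using hv a (by simpa [dst] using hdst)
    | cons b W =>
      obtain ⟨hab, hW⟩ := List.isChain_cons_cons.mp hW
      have hb : G.tail b = v := by simpa [src] using ih hW (by simpa [dst] using hdst)
      simp [src, hv a (hab.trans hb)]

theorem eq_of_reaches {u v : V} (hv : ∀ a, G.head a = v → G.tail a = v) (h : G.Reaches u v) :
    u = v := by
  obtain rfl | ⟨W, hW, hsrc, hdst⟩ := h
  · rfl
  · exact Option.some.inj (hsrc.symm.trans (src_eq_of_dst_eq hv hW hdst))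

theorem IsWalk.exists_pair_sublist_tail_eq_head {W : List E} {e x : E} (hW : G.IsWalk W)
    (hlast : W.getLast? ≠ some e) (hxe : [x, e] <+ W) :
    ∃ z, [x, z] <+ W ∧ G.tail z = G.head e := by
  induction W with
  | nil => simp at hxe
  | cons a W ih =>
    obtain ⟨b, W, rfl⟩ : ∃ b W₀, W = b :: W₀ :=
      List.exists_cons_of_ne_nil (by rintro rfl; simp at hxe)
    rw [List.getLast?_cons_cons] at hlast
    rcases List.sublist_cons_iff.mp hxe with hxe | ⟨r, hr, hre⟩
    · obtain ⟨z, hz, hze⟩ := ih hW.tail hlast hxe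
      exact ⟨z, hz.cons a, hze⟩
    · obtain ⟨rfl, rfl⟩ := List.cons_eq_cons.mp hr
      obtain ⟨z, hz, hez⟩ :=
        hW.tail.exists_rel_of_mem_of_getLast?_ne (List.singleton_sublist.mp hre) hlast
      exact ⟨z, (List.singleton_sublist.mpr hz).cons_cons x, hez.symm⟩

theorem IsWalk.pair_sublist_of_tail_eq_head {W : List E} {e x y : E} (hW : G.IsWalk W)
    (hin : ∀ a, G.head a = G.head e → a = e) (hxe : x ≠ e) (hxy : [x, y] <+ W)
    (hy : G.tail y = G.head e) : [x, e] <+ W := by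
  induction W with
  | nil => simp at hxy
  | cons a W ih =>
    rcases List.sublist_cons_iff.mp hxy with hxy | ⟨r, hr, hry⟩
    · exact (ih hW.tail hxy).cons a
    · obtain ⟨rfl, rfl⟩ := List.cons_eq_cons.mp hr
      obtain ⟨z, hz, hzy⟩ := hW.exists_rel_of_mem_tail (List.singleton_sublist.mp hry)
      obtain rfl := hin z (hzy.trans hy)
      have hzW : z ∈ W := (List.mem_cons.mp hz).resolve_left (Ne.symm hxe)
      exact (List.singleton_sublist.mpr hzW).cons_cons x

variable {e : E}

theorem not_forbiddenPath_of_head_eq (hin : ∀ a, G.head a = G.head e → a = e) (eR : E)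
    (P : List E) : ¬ G.ForbiddenPath eR e P := by
  rw [forbiddenPath_iff]
  rintro ⟨-, -, g, -, hg, hge⟩
  exact hge (hin g hg)

theorem eq_of_mem_of_tail_eq_head (hin : ∀ a, G.head a = G.head e → a = e) {f a : E}
    {W : List E} (hW : G.IsWalk (f :: W)) (he : e ∉ f :: W) (ha : a ∈ f :: W)
    (hv : G.tail a = G.head e) : a = f := by
  rcases List.mem_cons.mp ha with rfl | ha
  · rfl
  · obtain ⟨z, hz, hza⟩ := hW.exists_rel_of_mem_tail ha
    exact absurd (hin z (hza.trans hv) ▸ hz) he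

theorem exists_forbiddenPath_suffix (hin : ∀ a, G.head a = G.head e → a = e)
    (hne : G.tail e ≠ G.head e) {eR eL : E} {P : List E} (hF : G.ForbiddenPath eR eL P)
    (heP : e ∉ P) (hu : G.tail e ∈ P.map G.tail) (hv : G.head e ∈ P.map G.tail) :
    G.tail eR = G.head e ∧ ∃ Q, G.ForbiddenPath e eL Q ∧ G.head e ∉ Q.map G.tail := by
  rw [forbiddenPath_iff] at hF
  obtain ⟨hP, ⟨f, hf, hfR, -⟩, hend⟩ := hF
  obtain ⟨W, rfl⟩ := List.head?_eq_some_iff.mp hf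
  obtain ⟨a, ha, hav⟩ := List.mem_map.mp hv
  obtain ⟨b, hb, hbu⟩ := List.mem_map.mp hu
  obtain ⟨s, t, hst⟩ := List.append_of_mem hb
  have hsuffix : b :: t <:+ f :: W := hst ▸ List.suffix_append s _
  have hQ := hP.suffix hsuffix
  have heQ : e ∉ b :: t := fun h => heP (hsuffix.subset h)
  have hfv : G.tail f = G.head e := eq_of_mem_of_tail_eq_head hin hP.1 heP ha hav ▸ hav
  refine ⟨hfR ▸ hfv, b :: t, ?_, ?_⟩
  · rw [forbiddenPath_iff]
    refine ⟨hQ, ⟨b, rfl, hbu, fun h => heP (h ▸ hb)⟩, ?_⟩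
    rwa [hst, List.getLast?_append_of_ne_nil _ (List.cons_ne_nil _ _)] at hend
  · intro hvQ
    obtain ⟨c, hc, hcv⟩ := List.mem_map.mp hvQ
    have hbv : G.tail b = G.head e := eq_of_mem_of_tail_eq_head hin hQ.1 heQ hc hcv ▸ hcv
    exact hne (hbu.symm.trans hbv)

/-- In the contraction, an arc leaving `head e` also plays the role of `e` itself. -/
def StandsFor (G : MultiDigraph V E) (e : E) (a' : {x // x ≠ e}) (a : E) : Prop :=
  a'.1 = a ∨ a = e ∧ G.tail a'.1 = G.head e

theorem StandsFor.eq (hne : G.tail e ≠ G.head e) {a' : {x // x ≠ e}} {a b : E}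
    (ha : G.StandsFor e a' a) (hb : G.StandsFor e a' b) (hab : G.tail a = G.tail b) : a = b := by
  rcases ha with rfl | ⟨rfl, ha⟩ <;> rcases hb with rfl | ⟨rfl, hb⟩
  · rfl
  · exact absurd (hab.symm.trans hb) hne
  · exact absurd (hab.trans ha) hne
  · rfl

section ContractWalk

variable [DecidableEq E]

def contractWalk (e : E) (W : List E) : List {a // a ≠ e} :=
  W.filterMap fun a => if h : a = e then none else some ⟨a, h⟩

theorem contractWalk_cons_self (W : List E) : contractWalk e (e :: W) = contractWalk e W := by
  simp [contractWalk]

theorem contractWalk_cons_of_ne {a : E} (h : a ≠ e) (W : List E) :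
    contractWalk e (a :: W) = ⟨a, h⟩ :: contractWalk e W := by
  simp [contractWalk, h]

theorem map_val_contractWalk (W : List E) :
    (contractWalk e W).map Subtype.val = W.filter (fun a => a ≠ e) := by
  induction W with
  | nil => rfl
  | cons a W ih =>
    by_cases h : a = e
    · subst h; simpa [contractWalk_cons_self] using ih
    · simpa [contractWalk_cons_of_ne h, h] using ih

theorem map_contractWalk (f : E → V) (W : List E) :
    (contractWalk e W).map (fun a => f a.1) = (W.filter (fun a => a ≠ e)).map f := by
  rw [← map_val_contractWalk, List.map_map]
  rfl

theorem getLast?_contractWalk {W : List E} {g : E} (h : W.getLast? = some g) (hg : g ≠ e) :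
    (contractWalk e W).getLast? = some ⟨g, hg⟩ := by
  obtain ⟨W, rfl⟩ := List.getLast?_eq_some_iff.mp h
  simp [contractWalk, List.filterMap_append, hg]

theorem standsFor_of_head?_contractWalk {W : List E} (hW : G.IsWalk W) {b : {x // x ≠ e}}
    (hb : (contractWalk e W).head? = some b) {f : E} (hf : W.head? = some f) :
    G.StandsFor e b f := by
  induction W generalizing f with
  | nil => simp at hf
  | cons a W ih =>
    obtain rfl : a = f := by simpa using hf
    by_cases ha : a = e
    · subst ha
      rw [contractWalk_cons_self] at hb
      obtain ⟨g, W, rfl⟩ : ∃ g W₀, W = g :: W₀ :=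
        List.exists_cons_of_ne_nil (by rintro rfl; simp [contractWalk] at hb)
      have hg : G.head a = G.tail g := (List.isChain_cons_cons.mp hW).1
      refine Or.inr ⟨rfl, ?_⟩
      rcases ih hW.tail hb rfl with h | ⟨rfl, h⟩
      · rw [h, hg]
      · exact h
    · rw [contractWalk_cons_of_ne ha, List.head?_cons, Option.some_inj] at hb
      exact Or.inl (congrArg Subtype.val hb.symm)

end ContractWalk

variable [DecidableEq V]

variable (G e) in
def contractNode (x : V) : V := if x = G.head e then G.tail e else x

theorem contract_tail (a : {x // x ≠ e}) :
    (G.contract e).tail a = G.contractNode e (G.tail a.1) := rfl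

theorem contract_head (hin : ∀ a, G.head a = G.head e → a = e) (a : {x // x ≠ e}) :
    (G.contract e).head a = G.head a.1 :=
  if_neg fun h => a.2 (hin _ h)

theorem contractNode_head : G.contractNode e (G.head e) = G.tail e := if_pos rfl

theorem contractNode_tail : G.contractNode e (G.tail e) = G.tail e := by
  unfold contractNode; split_ifs <;> rfl

theorem contractNode_of_ne {x : V} (h : x ≠ G.head e) : G.contractNode e x = x := if_neg h

theorem StandsFor.contract_tail {a' : {x // x ≠ e}} {a : E} (h : G.StandsFor e a' a) :
    (G.contract e).tail a' = G.contractNode e (G.tail a) := by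
  rcases h with rfl | ⟨rfl, h⟩
  · rfl
  · rw [MultiDigraph.contract_tail, h, contractNode_head, contractNode_tail]

variable (G e) in
def expandArc (b : {x // x ≠ e}) : List E :=
  if G.tail b.1 = G.head e then [e, b.1] else [b.1]

variable (G e) in
def expandWalk (W' : List {x // x ≠ e}) : List E := W'.flatMap (G.expandArc e)

theorem expandWalk_cons (b : {x // x ≠ e}) (W' : List {x // x ≠ e}) :
    G.expandWalk e (b :: W') = G.expandArc e b ++ G.expandWalk e W' := List.flatMap_cons

theorem getLast?_expandArc (b : {x // x ≠ e}) : (G.expandArc e b).getLast? = some b.1 := by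
  unfold expandArc; split_ifs <;> rfl

theorem head?_expandArc (b : {x // x ≠ e}) :
    (G.expandArc e b).head? = some (if G.tail b.1 = G.head e then e else b.1) := by
  unfold expandArc; split_ifs <;> rfl

theorem getLast?_expandWalk (W' : List {x // x ≠ e}) :
    (G.expandWalk e W').getLast? = W'.getLast?.map Subtype.val := by
  induction W' with
  | nil => rfl
  | cons b W' ih =>
    rw [expandWalk_cons, List.getLast?_append, ih, getLast?_expandArc]
    cases W' <;> simp [List.getLast?_eq_some_getLast]

theorem isWalk_expandWalk (hin : ∀ a, G.head a = G.head e → a = e) {W' : List {x // x ≠ e}}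
    (hW' : (G.contract e).IsWalk W') : G.IsWalk (G.expandWalk e W') := by
  induction W' with
  | nil => exact List.isChain_nil
  | cons b W' ih =>
    rw [expandWalk_cons]
    refine List.isChain_append.mpr ⟨?_, ih hW'.tail, fun x hx y hy => ?_⟩
    · unfold expandArc
      split_ifs with h
      · exact List.isChain_pair.mpr h.symm
      · exact List.isChain_singleton _
    · obtain ⟨c, W', rfl⟩ : ∃ c W₀, W' = c :: W₀ :=
        List.exists_cons_of_ne_nil (by rintro rfl; simp [expandWalk] at hy)
      have hbc : G.head b.1 = G.contractNode e (G.tail c.1) := by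
        rw [← contract_head hin, ← contract_tail]; exact (List.isChain_cons_cons.mp hW').1
      rw [getLast?_expandArc, Option.mem_some_iff] at hx
      rw [expandWalk_cons, List.head?_append, head?_expandArc, Option.some_or,
        Option.mem_some_iff] at hy
      subst hx hy
      unfold contractNode at hbc
      split_ifs at hbc ⊢ <;> exact hbc

theorem isPath_expandWalk (hin : ∀ a, G.head a = G.head e → a = e) (hne : G.tail e ≠ G.head e)
    {P' : List {x // x ≠ e}} (hP' : (G.contract e).IsPath P') :
    G.IsPath (G.expandWalk e P') := by
  rw [isPath_iff_nodup] at hP' ⊢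
  obtain ⟨hW', ht', hh'⟩ := hP'
  rw [show (G.contract e).head = fun a => G.head a.1 from funext (contract_head hin)] at hh'
  have hb : ∀ b : {x // x ≠ e}, G.head b.1 ≠ G.head e := fun b h => b.2 (hin _ h)
  refine ⟨isWalk_expandWalk hin hW', ?_, ?_⟩
  · rw [expandWalk, List.map_flatMap, List.nodup_flatMap]
    refine ⟨fun b _ => ?_, (List.pairwise_map.mp ht').imp fun {a b} hab => ?_⟩
    · unfold expandArc; split_ifs with h <;> simp [h, hne]
    · simp only [contract_tail, contractNode] at hab
      unfold expandArc Function.onFun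
      split_ifs at hab ⊢ <;> simp_all [eq_comm]
  · rw [expandWalk, List.map_flatMap, List.nodup_flatMap]
    refine ⟨fun b _ => ?_, ((List.pairwise_map.mp ht').and (List.pairwise_map.mp hh')).imp
      fun {a b} hab => ?_⟩
    · unfold expandArc; split_ifs with h <;> simp [(hb b).symm]
    · have ha := hb a
      have hb := hb b
      simp only [contract_tail, contractNode] at hab
      unfold expandArc Function.onFun
      split_ifs at hab ⊢ <;> simp_all [eq_comm]

theorem exists_forbiddenPath_of_contract (hin : ∀ a, G.head a = G.head e → a = e)
    (hne : G.tail e ≠ G.head e) {eR' eL' : {x // x ≠ e}} {P' : List {x // x ≠ e}}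
    (hF : (G.contract e).ForbiddenPath eR' eL' P') :
    ∃ eR, G.StandsFor e eR' eR ∧ ∃ P, G.ForbiddenPath eR eL'.1 P := by
  rw [forbiddenPath_iff] at hF
  obtain ⟨hP', ⟨f, hf, hfR, hfne⟩, g, hg, hgL, hgne⟩ := hF
  obtain ⟨W', rfl⟩ := List.head?_eq_some_iff.mp hf
  have hfne : f.1 ≠ eR'.1 := fun h => hfne (Subtype.ext h)
  have key : ∀ a R eR, a :: R <:+ G.expandWalk e (f :: W') → G.tail a = G.tail eR → a ≠ eR →
      G.ForbiddenPath eR eL'.1 (a :: R) := by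
    intro a R eR ⟨s, hs⟩ ha haR
    rw [forbiddenPath_iff]
    refine ⟨(isPath_expandWalk hin hne hP').suffix ⟨s, hs⟩, ⟨a, rfl, ha, haR⟩, g.1, ?_, ?_, ?_⟩
    · rw [← List.getLast?_append_of_ne_nil s (List.cons_ne_nil a R), hs, getLast?_expandWalk, hg]
      rfl
    · rwa [contract_head hin, contract_head hin] at hgL
    · exact fun h => hgne (Subtype.ext h)
  rw [contract_tail, contract_tail] at hfR
  by_cases hfv : G.tail f.1 = G.head e
  · have hQ : G.expandWalk e (f :: W') = e :: f.1 :: G.expandWalk e W' := by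
      rw [expandWalk_cons, expandArc, if_pos hfv]; rfl
    rw [hfv, contractNode_head] at hfR
    by_cases hRv : G.tail eR'.1 = G.head e
    · exact ⟨_, Or.inl rfl, _, key _ _ _ ⟨[e], hQ.symm⟩ (hfv.trans hRv.symm) hfne⟩
    · rw [contractNode_of_ne hRv] at hfR
      exact ⟨_, Or.inl rfl, _, key _ _ _ ⟨[], hQ.symm⟩ hfR (Ne.symm eR'.2)⟩
  · have hQ : G.expandWalk e (f :: W') = f.1 :: G.expandWalk e W' := by
      rw [expandWalk_cons, expandArc, if_neg hfv]; rfl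
    rw [contractNode_of_ne hfv] at hfR
    by_cases hRv : G.tail eR'.1 = G.head e
    · rw [hRv, contractNode_head] at hfR
      exact ⟨e, Or.inr ⟨rfl, hRv⟩, _, key _ _ _ ⟨[], hQ.symm⟩ hfR f.2⟩
    · rw [contractNode_of_ne hRv] at hfR
      exact ⟨_, Or.inl rfl, _, key _ _ _ ⟨[], hQ.symm⟩ hfR hfne⟩

variable [DecidableEq E]

theorem isWalk_contractWalk (hin : ∀ a, G.head a = G.head e → a = e) {W : List E}
    (hW : G.IsWalk W) : (G.contract e).IsWalk (contractWalk e W) := by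
  induction W with
  | nil => exact List.isChain_nil
  | cons a W ih =>
    by_cases ha : a = e
    · subst ha
      rw [contractWalk_cons_self]
      exact ih hW.tail
    · rw [contractWalk_cons_of_ne ha]
      refine List.isChain_cons.mpr ⟨fun b hb => ?_, ih hW.tail⟩
      obtain ⟨g, W, rfl⟩ : ∃ g W₀, W = g :: W₀ :=
        List.exists_cons_of_ne_nil (by rintro rfl; simp [contractWalk] at hb)
      have hag : G.head a = G.tail g := (List.isChain_cons_cons.mp hW).1
      rw [contract_head hin, (standsFor_of_head?_contractWalk hW.tail hb rfl).contract_tail,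
        ← hag, contractNode_of_ne fun h => ha (hin a h)]

theorem isPath_contractWalk (hin : ∀ a, G.head a = G.head e → a = e) {P : List E}
    (hP : G.IsPath P)
    (hnd : G.tail e ∈ P.map G.tail → G.head e ∈ P.map G.tail → e ∈ P) :
    (G.contract e).IsPath (contractWalk e P) := by
  rw [isPath_iff_nodup] at hP ⊢
  obtain ⟨hW, ht, hh⟩ := hP
  have htinj := List.inj_on_of_nodup_map ht
  have hsplit : ∀ x ∈ P, ∀ y ∈ P, y ≠ e → G.tail x = G.head e → G.tail y = G.tail e → False :=
    fun x hx y hy hye hxv hyu =>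
      hye (htinj hy (hnd (hyu ▸ List.mem_map_of_mem hy) (hxv ▸ List.mem_map_of_mem hx)) hyu)
  refine ⟨isWalk_contractWalk hin hW, ?_, ?_⟩
  · rw [show (G.contract e).tail = fun a => G.contractNode e (G.tail a.1) from rfl,
      map_contractWalk (fun a => G.contractNode e (G.tail a))]
    refine List.Nodup.map_on (fun x hx y hy hxy => ?_) ((ht.of_map _).filter _)
    simp only [List.mem_filter, decide_eq_true_eq] at hx hy
    unfold contractNode at hxy
    split_ifs at hxy with hxv hyv hyv
    · exact htinj hx.1 hy.1 (hxv.trans hyv.symm)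
    · exact (hsplit x hx.1 y hy.1 hy.2 hxv hxy.symm).elim
    · exact (hsplit y hy.1 x hx.1 hx.2 hyv hxy).elim
    · exact htinj hx.1 hy.1 hxy
  · rw [show (G.contract e).head = fun a => G.head a.1 from funext (contract_head hin),
      map_contractWalk]
    exact hh.sublist (List.filter_sublist.map _)

theorem forbiddenPath_contractWalk (hin : ∀ a, G.head a = G.head e → a = e)
    (hne : G.tail e ≠ G.head e) {eR eL : E} {P : List E} (hF : G.ForbiddenPath eR eL P)
    (hnd : G.tail e ∈ P.map G.tail → G.head e ∈ P.map G.tail → e ∈ P) (heL : eL ≠ e)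
    {eR' : {x // x ≠ e}} (hR : G.StandsFor e eR' eR) :
    (G.contract e).ForbiddenPath eR' ⟨eL, heL⟩ (contractWalk e P) := by
  rw [forbiddenPath_iff] at hF ⊢
  obtain ⟨hP, ⟨f, hf, hfR, hfne⟩, g, hg, hgL, hgne⟩ := hF
  have hge : g ≠ e := fun h => heL (hin eL (hgL ▸ h ▸ rfl))
  have hlast := getLast?_contractWalk hg hge
  obtain ⟨b, hb⟩ : ∃ b, (contractWalk e P).head? = some b := by
    cases h : contractWalk e P with
    | nil => simp [h] at hlast
    | cons b _ => exact ⟨b, rfl⟩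
  have hbf := standsFor_of_head?_contractWalk hP.1 hb hf
  refine ⟨isPath_contractWalk hin hP hnd, ⟨b, hb, ?_, ?_⟩, ⟨g, hge⟩, hlast, ?_, ?_⟩
  · rw [hbf.contract_tail, hR.contract_tail, hfR]
  · rintro rfl
    exact hfne (hbf.eq hne hR hfR)
  · rwa [contract_head hin, contract_head hin]
  · exact fun h => hgne (congrArg Subtype.val h)

/-- Deleting `e` from a path yields a path of the contraction unless the path avoids `e` but
visits both `tail e` and `head e`, which the contraction identifies; such a path starts at
`head e`, and its suffix from `tail e` is forbidden for `e` instead. -/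
theorem exists_forbiddenPath_contract (hin : ∀ a, G.head a = G.head e → a = e)
    (hne : G.tail e ≠ G.head e) {eR eL : E} {P : List E} (hF : G.ForbiddenPath eR eL P)
    (heL : eL ≠ e) {eR' : {x // x ≠ e}} (hR : G.StandsFor e eR' eR) :
    ∃ P', (G.contract e).ForbiddenPath eR' ⟨eL, heL⟩ P' := by
  by_cases hnd : G.tail e ∈ P.map G.tail → G.head e ∈ P.map G.tail → e ∈ P
  · exact ⟨_, forbiddenPath_contractWalk hin hne hF hnd heL hR⟩
  · push Not at hnd
    obtain ⟨hRv, Q, hQ, hvQ⟩ := exists_forbiddenPath_suffix hin hne hF hnd.2.2 hnd.1 hnd.2.1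
    have hRe : G.StandsFor e eR' e := by
      rcases hR with rfl | ⟨-, hR⟩
      exacts [Or.inr ⟨rfl, hRv⟩, Or.inr ⟨rfl, hR⟩]
    exact ⟨_, forbiddenPath_contractWalk hin hne hQ (fun _ h => absurd h hvQ) heL hRe⟩

theorem filter_expandWalk (W' : List {x // x ≠ e}) :
    (G.expandWalk e W').filter (fun a => a ≠ e) = W'.map Subtype.val := by
  induction W' with
  | nil => rfl
  | cons b W' ih =>
    rw [expandWalk_cons, List.filter_append, ih, expandArc]
    split_ifs <;> simp [b.2]

theorem IsOmnitig.contractWalk (hin : ∀ a, G.head a = G.head e → a = e)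
    (hne : G.tail e ≠ G.head e) {W : List E} (hW : G.IsOmnitig W) :
    (G.contract e).IsOmnitig (contractWalk e W) := by
  rw [isOmnitig_iff_pairwise] at hW ⊢
  obtain ⟨hW, hpair⟩ := hW
  refine ⟨isWalk_contractWalk hin hW, List.pairwise_iff_forall_sublist.mpr
    fun {x' y'} hxy P' hP' => ?_⟩
  obtain ⟨eR, hR, P, hP⟩ := exists_forbiddenPath_of_contract hin hne hP'
  have hxyW : [x'.1, y'.1] <+ W := by
    have := hxy.map Subtype.val
    rw [map_val_contractWalk] at this
    exact this.trans List.filter_sublist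
  have hxR : [x'.1, eR] <+ W := by
    rcases hR with rfl | ⟨rfl, hyv⟩
    · exact hxyW
    · exact hW.pair_sublist_of_tail_eq_head hin x'.2 hxyW hyv
  exact List.pairwise_iff_forall_sublist.mp hpair hxR P hP

theorem isOmnitig_expandWalk (hin : ∀ a, G.head a = G.head e → a = e)
    (hne : G.tail e ≠ G.head e) {W' : List {x // x ≠ e}} (hW' : (G.contract e).IsOmnitig W') :
    G.IsOmnitig (G.expandWalk e W') := by
  rw [isOmnitig_iff_pairwise] at hW' ⊢
  obtain ⟨hW', hpair⟩ := hW'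
  have hW := isWalk_expandWalk hin hW'
  refine ⟨hW, List.pairwise_iff_forall_sublist.mpr fun {x y} hxy P hP => ?_⟩
  have hx : x ≠ e := by
    rintro rfl
    exact not_forbiddenPath_of_head_eq hin y P hP
  obtain ⟨y', hR, hxy'⟩ :
      ∃ y' : {a // a ≠ e}, G.StandsFor e y' y ∧ [x, y'.1] <+ G.expandWalk e W' := by
    by_cases hy : y = e
    · rw [hy] at hxy
      have hlast : (G.expandWalk e W').getLast? ≠ some e := by
        rw [getLast?_expandWalk]
        intro h
        obtain ⟨b, -, hb⟩ := Option.map_eq_some_iff.mp h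
        exact b.2 hb
      obtain ⟨z, hz, hzv⟩ := hW.exists_pair_sublist_tail_eq_head hlast hxy
      exact ⟨⟨z, fun h => hne (h ▸ hzv)⟩, Or.inr ⟨hy, hzv⟩, hz⟩
    · exact ⟨⟨y, hy⟩, Or.inl rfl, hxy⟩
  have hxyW' : [⟨x, hx⟩, y'] <+ W' := by
    refine List.Sublist.of_map_injective Subtype.val_injective ?_
    have := hxy'.filter (fun a => a ≠ e)
    rwa [filter_expandWalk, List.filter_eq_self.mpr (by simp [hx, y'.2])] at this
  obtain ⟨P', hP'⟩ := exists_forbiddenPath_contract hin hne hP hx hR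
  exact List.pairwise_iff_forall_sublist.mp hpair hxyW' P' hP'

end MultiDigraph

open MultiDigraph in
theorem stmt_19_general {V E : Type} [DecidableEq V] [DecidableEq E]
    (G : MultiDigraph V E) (hG : G.StronglyConnected)
    (e : E) (he : G.inDeg (G.head e) = 1)
    (W' : List {a : E // a ≠ e}) :
    (G.contract e).IsOmnitig W' ↔
      ∃ W : List E, G.IsOmnitig W ∧
        W'.map Subtype.val = W.filter (fun a => a ≠ e) := by
  have hin : ∀ a, G.head a = G.head e → a = e := fun a ha => eq_of_inDeg_eq_one he ha rfl
  by_cases hne : G.tail e = G.head e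
  · have hv : ∀ v, v = G.head e :=
      fun v => eq_of_reaches (fun a ha => hin a ha ▸ hne) (hG v (G.head e))
    obtain rfl : W' = [] := List.eq_nil_iff_forall_not_mem.mpr fun a _ => a.2 (hin a.1 (hv _))
    exact iff_of_true isOmnitig_nil ⟨[], isOmnitig_nil, rfl⟩
  constructor
  · exact fun hW' => ⟨_, isOmnitig_expandWalk hin hne hW', (filter_expandWalk W').symm⟩
  · rintro ⟨W, hW, hW'⟩
    obtain rfl : contractWalk e W = W' :=
      List.map_injective_iff.mpr Subtype.val_injective (by rw [map_val_contractWalk, hW'])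
    exact hW.contractWalk hin hne

/-- for a join-free arc `e`, a walk of the contracted graph is an
omnitig iff it arises from an omnitig of `G` by deleting every occurrence of `e`. -/
theorem stmt_19 {V E : Type} [Fintype V] [Fintype E] [DecidableEq V] [DecidableEq E]
    (G : MultiDigraph V E) (hG : G.StronglyConnected)
    (e : E) (he : G.inDeg (G.head e) = 1)
    (W' : List {a : E // a ≠ e}) :
    (G.contract e).IsOmnitig W' ↔
      ∃ W : List E, G.IsOmnitig W ∧
        W'.map Subtype.val = W.filter (fun a => a ≠ e) :=
  stmt_19_general G hG e he W'
end
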